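/- Let A, B be positive definite n×n matrices, Z ∈ M_n(ℂ), and α > 0. Then the function t ↦ log ‖ |A^t Z B^t|^α ‖ is convex on ℝ, where ‖·‖ is the operator norm; equivalently, for all s, t ∈ ℝ, ‖ |A^{(s+t)/2} Z B^{(s+t)/2}|^α ‖ ≤ ‖ |A^t Z B^t|^α ‖^{1/2} ‖ |A^s Z B^s|^α ‖^{1/2}. -/

import Mathlib

/-!
Since `‖ |X|^α ‖ = ‖X‖^α`, everything reduces to `g t = ‖A^t Z B^t‖`. With `m = (s + t) / 2`,
the C⋆-identity and the invariance of the spectral radius `r` under cyclic permutations give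
`g m ^ 2 = r(Z⋆ A^{2m} Z B^{2m}) = r(A^s Z B^s · (A^t Z B^t)⋆) ≤ g s * g t`.
This is midpoint convexity of `log g`, and continuity of `g` upgrades it to convexity.
-/

open Matrix ComplexOrder

/-- The absolute value `|M| = (Mᴴ M)^{1/2}` of a complex matrix. -/
noncomputable def matAbs {n : ℕ} (M : Matrix (Fin n) (Fin n) ℂ) : Matrix (Fin n) (Fin n) ℂ :=
  ((Matrix.posSemidef_conjTranspose_mul_self M).1.eigenvectorUnitary : Matrix (Fin n) (Fin n) ℂ) *
    diagonal ((↑) ∘ (√·) ∘ (Matrix.posSemidef_conjTranspose_mul_self M).1.eigenvalues) *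
    (star ((Matrix.posSemidef_conjTranspose_mul_self M).1.eigenvectorUnitary :
      Matrix (Fin n) (Fin n) ℂ))

theorem matAbs_posSemidef {n : ℕ} (M : Matrix (Fin n) (Fin n) ℂ) : (matAbs M).PosSemidef :=
  by
    unfold matAbs
    rw [Matrix.star_eq_conjTranspose]
    refine Matrix.PosSemidef.mul_mul_conjTranspose_same ?_ _
    rw [Matrix.posSemidef_diagonal_iff]
    intro i
    simp [Complex.zero_le_real, Real.sqrt_nonneg]

/-- Eigenvalues of a Hermitian matrix arranged in decreasing order:
`eigDesc hM j` is the `j`-th largest eigenvalue. -/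
noncomputable def eigDesc {n : ℕ} {M : Matrix (Fin n) (Fin n) ℂ} (hM : M.IsHermitian) :
    Fin n → ℝ :=
  fun i => hM.eigenvalues (Tuple.sort hM.eigenvalues i.rev)

/-- Eigenvalues of a Hermitian matrix arranged in increasing order. -/
noncomputable def eigAsc {n : ℕ} {M : Matrix (Fin n) (Fin n) ℂ} (hM : M.IsHermitian) :
    Fin n → ℝ :=
  fun i => hM.eigenvalues (Tuple.sort hM.eigenvalues i)

/-- The largest eigenvalue of a Hermitian matrix. -/
noncomputable def maxEig {n : ℕ} {M : Matrix (Fin n) (Fin n) ℂ} (hM : M.IsHermitian) : ℝ :=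
  ⨆ i, hM.eigenvalues i

/-- Real power `M^t` of a Hermitian matrix, via the spectral decomposition. -/
noncomputable def rpowH {n : ℕ} {M : Matrix (Fin n) (Fin n) ℂ} (hM : M.IsHermitian) (t : ℝ) :
    Matrix (Fin n) (Fin n) ℂ :=
  (hM.eigenvectorUnitary : Matrix (Fin n) (Fin n) ℂ) *
    Matrix.diagonal (fun i => ((hM.eigenvalues i ^ t : ℝ) : ℂ)) *
    star (hM.eigenvectorUnitary : Matrix (Fin n) (Fin n) ℂ)

theorem rpowH_isHermitian {n : ℕ} {M : Matrix (Fin n) (Fin n) ℂ} (hM : M.IsHermitian) (t : ℝ) :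
    (rpowH hM t).IsHermitian := by
  unfold rpowH
  unfold Matrix.IsHermitian
  simp [Matrix.conjTranspose_mul, Matrix.diagonal_conjTranspose, mul_assoc,
    Matrix.star_eq_conjTranspose]
  congr 2
  funext i
  simp [star]
  rfl

/-- The ℓ²→ℓ² operator norm of a complex matrix. -/
noncomputable def opN {n : ℕ} (M : Matrix (Fin n) (Fin n) ℂ) : ℝ :=
  ‖Matrix.toEuclideanCLM (𝕜 := ℂ) M‖

open scoped NNReal ENNReal

theorem spectralRadius_mul_comm {𝕜 A : Type*} [NormedField 𝕜] [Ring A] [Algebra 𝕜 A]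
    (a b : A) : spectralRadius 𝕜 (a * b) = spectralRadius 𝕜 (b * a) := by
  suffices key : ∀ x y : A, spectralRadius 𝕜 (x * y) ≤ spectralRadius 𝕜 (y * x) from
    (key a b).antisymm (key b a)
  intro x y
  refine iSup₂_le fun k hk => ?_
  rcases eq_or_ne k 0 with rfl | hk0
  · simp
  · have hk' : k ∈ spectrum 𝕜 (y * x) := (spectrum.nonzero_mul_comm (𝕜 := 𝕜) x y ▸ ⟨hk, hk0⟩ :
      k ∈ spectrum 𝕜 (y * x) \ {0}).1
    exact le_iSup₂ (f := fun k _ => (‖k‖₊ : ℝ≥0∞)) k hk'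

section CStarAlgebra

variable {E : Type*} [CStarAlgebra E]

theorem norm_mul_mul_sq_le_of_mul_self_eq {a b a₁ a₂ b₁ b₂ x : E}
    (ha : IsSelfAdjoint a) (hb : IsSelfAdjoint b) (ha₁ : IsSelfAdjoint a₁)
    (hb₁ : IsSelfAdjoint b₁) (haa : a * a = a₁ * a₂) (hbb : b * b = b₂ * b₁) :
    ‖a * x * b‖ ^ 2 ≤ ‖a₁ * x * b₁‖ * ‖a₂ * x * b₂‖ := by
  nontriviality E
  have hstar : star (a₁ * x * b₁) = b₁ * (star x * a₁) := by
    rw [star_mul, star_mul, ha₁.star_eq, hb₁.star_eq]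
  have key : ((‖a * x * b‖₊ ^ 2 : ℝ≥0) : ℝ≥0∞) ≤ ((‖a₁ * x * b₁‖₊ * ‖a₂ * x * b₂‖₊ : ℝ≥0) : ℝ≥0∞) :=
    calc ((‖a * x * b‖₊ ^ 2 : ℝ≥0) : ℝ≥0∞)
        = spectralRadius ℂ (star (a * x * b) * (a * x * b)) := by
          rw [(IsSelfAdjoint.star_mul_self _).spectralRadius_eq_nnnorm,
            CStarRing.nnnorm_star_mul_self, sq]
      _ = spectralRadius ℂ (b * (star x * (a₁ * a₂) * x * b)) := by
          rw [← haa, star_mul, star_mul, ha.star_eq, hb.star_eq]; simp only [mul_assoc]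
      _ = spectralRadius ℂ ((star x * a₁) * (a₂ * x * b₂ * b₁)) := by
          rw [spectralRadius_mul_comm, mul_assoc _ b b, hbb]; simp only [mul_assoc]
      _ = spectralRadius ℂ ((a₂ * x * b₂) * star (a₁ * x * b₁)) := by
          rw [spectralRadius_mul_comm, hstar]; simp only [mul_assoc]
      _ ≤ ‖(a₂ * x * b₂) * star (a₁ * x * b₁)‖₊ := spectrum.spectralRadius_le_nnnorm _
      _ ≤ ((‖a₁ * x * b₁‖₊ * ‖a₂ * x * b₂‖₊ : ℝ≥0) : ℝ≥0∞) := by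
          rw [mul_comm ‖a₁ * x * b₁‖₊, ← nnnorm_star (a₁ * x * b₁)]
          exact_mod_cast nnnorm_mul_le _ _
  exact_mod_cast key

variable [PartialOrder E] [StarOrderedRing E]

theorem norm_rpow_mul_mul_rpow_midpoint_sq_le {a b : E} (ha : IsUnit a) (hb : IsUnit b)
    (x : E) (s t : ℝ) :
    ‖a ^ ((s + t) / 2) * x * b ^ ((s + t) / 2)‖ ^ 2 ≤
      ‖a ^ t * x * b ^ t‖ * ‖a ^ s * x * b ^ s‖ := by
  have hst : (s + t) / 2 + (s + t) / 2 = s + t := by ring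
  refine norm_mul_mul_sq_le_of_mul_self_eq CFC.rpow_nonneg.isSelfAdjoint
    CFC.rpow_nonneg.isSelfAdjoint CFC.rpow_nonneg.isSelfAdjoint CFC.rpow_nonneg.isSelfAdjoint ?_ ?_
  · rw [← CFC.rpow_add ha, hst, add_comm, CFC.rpow_add ha]
  · rw [← CFC.rpow_add hb, hst, CFC.rpow_add hb]

theorem rpow_mul_mul_rpow_ne_zero {a b x : E} (ha : IsStrictlyPositive a)
    (hb : IsStrictlyPositive b) (hx : x ≠ 0) (t : ℝ) : a ^ t * x * b ^ t ≠ 0 := by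
  intro h
  apply hx
  calc x = a ^ (-t) * (a ^ t * x * b ^ t) * b ^ (-t) := by
        rw [mul_assoc, mul_assoc, CFC.rpow_mul_rpow_neg t, mul_one, ← mul_assoc,
          CFC.rpow_neg_mul_rpow t, one_mul]
    _ = 0 := by rw [h, mul_zero, zero_mul]

end CStarAlgebra

open Set in
/-- Extremal argument: at the leftmost maximiser `c₀` of `φ` on `[0, 1]`, midpoint convexity
for the symmetric pair `c₀ ± δ` would force a strictly smaller value. -/
theorem nonpos_on_Icc_of_midpoint_convex {φ : ℝ → ℝ} (hc : ContinuousOn φ (Icc 0 1))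
    (h₀ : φ 0 ≤ 0) (h₁ : φ 1 ≤ 0)
    (hmid : ∀ u ∈ Icc (0 : ℝ) 1, ∀ v ∈ Icc (0 : ℝ) 1, φ ((u + v) / 2) ≤ (φ u + φ v) / 2) :
    ∀ c ∈ Icc (0 : ℝ) 1, φ c ≤ 0 := by
  by_contra! ⟨c, hc01, hpos⟩
  obtain ⟨m, hm, hmax⟩ := isCompact_Icc.exists_isMaxOn ⟨c, hc01⟩ hc
  have hM : 0 < φ m := hpos.trans_le (hmax hc01)
  have hS : IsCompact (Icc 0 1 ∩ φ ⁻¹' Ici (φ m)) :=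
    isCompact_Icc.of_isClosed_subset (hc.preimage_isClosed_of_isClosed isClosed_Icc isClosed_Ici)
      inter_subset_left
  obtain ⟨c₀, ⟨hc₀, hc₀M : φ m ≤ φ c₀⟩, hleast⟩ := hS.exists_isLeast ⟨m, hm, (le_rfl : φ m ≤ φ m)⟩
  have hc₀0 : 0 < c₀ := hc₀.1.lt_of_ne (by rintro rfl; linarith)
  have hc₀1 : c₀ < 1 := hc₀.2.lt_of_ne (by rintro rfl; linarith)
  set δ := min c₀ (1 - c₀)
  have hδ : 0 < δ := lt_min hc₀0 (by linarith)
  have hu : c₀ - δ ∈ Icc (0 : ℝ) 1 := ⟨by linarith [min_le_left c₀ (1 - c₀)], by linarith⟩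
  have hv : c₀ + δ ∈ Icc (0 : ℝ) 1 := ⟨by linarith, by linarith [min_le_right c₀ (1 - c₀)]⟩
  have hφu : φ (c₀ - δ) < φ m := lt_of_not_ge fun h => by linarith [hleast ⟨hu, h⟩]
  have := hmid _ hu _ hv
  rw [show (c₀ - δ + (c₀ + δ)) / 2 = c₀ by ring] at this
  linarith [show φ (c₀ + δ) ≤ φ m from hmax hv]

theorem convexOn_of_continuousOn_of_midpoint {E : Type*} [AddCommGroup E] [Module ℝ E]
    [TopologicalSpace E] [IsTopologicalAddGroup E] [ContinuousSMul ℝ E] {s : Set E} {f : E → ℝ}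
    (hs : Convex ℝ s) (hf : ContinuousOn f s)
    (hmid : ∀ x ∈ s, ∀ y ∈ s, f (midpoint ℝ x y) ≤ (f x + f y) / 2) : ConvexOn ℝ s f := by
  refine ⟨hs, fun x hx y hy a b ha hb hab => ?_⟩
  set γ : ℝ → E := fun c => (1 - c) • x + c • y
  have hγ : ∀ c ∈ Set.Icc (0 : ℝ) 1, γ c ∈ s := fun c hc =>
    hs hx hy (by linarith [hc.2]) hc.1 (by ring)
  have hγmid (u v : ℝ) : γ ((u + v) / 2) = midpoint ℝ (γ u) (γ v) := by
    rw [midpoint_eq_smul_add, invOf_eq_inv]; module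
  have key := nonpos_on_Icc_of_midpoint_convex (φ := fun c => f (γ c) - ((1 - c) * f x + c * f y))
    ((hf.comp (by fun_prop : Continuous γ).continuousOn hγ).sub (by fun_prop))
    (by simp [γ]) (by simp [γ])
    (fun u hu v hv => by
      have := hmid _ (hγ u hu) _ (hγ v hv)
      simp only [hγmid]
      linarith)
    b ⟨hb, by linarith⟩
  simp only [γ, show 1 - b = a by linarith, smul_eq_mul] at key ⊢
  linarith

theorem convexOn_log_of_sq_le_mul {E : Type*} [AddCommGroup E] [Module ℝ E]
    [TopologicalSpace E] [IsTopologicalAddGroup E] [ContinuousSMul ℝ E] {s : Set E} {F : E → ℝ}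
    (hs : Convex ℝ s) (hF : ContinuousOn F s) (hpos : ∀ x ∈ s, 0 < F x)
    (hmid : ∀ x ∈ s, ∀ y ∈ s, F (midpoint ℝ x y) ^ 2 ≤ F x * F y) :
    ConvexOn ℝ s fun x => Real.log (F x) := by
  refine convexOn_of_continuousOn_of_midpoint hs (hF.log fun x hx => (hpos x hx).ne')
    fun x hx y hy => ?_
  have h := Real.log_le_log (pow_pos (hpos _ (hs.midpoint_mem hx hy)) 2) (hmid x hx y hy)
  rw [Real.log_pow, Real.log_mul (hpos x hx).ne' (hpos y hy).ne'] at h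
  push_cast at h
  linarith

theorem sq_rpow_le_mul_rpow_of_sq_le {x y z r : ℝ} (hx : 0 ≤ x) (hy : 0 ≤ y) (hz : 0 ≤ z)
    (h : x ^ 2 ≤ y * z) (hr : 0 ≤ r) : (x ^ r) ^ 2 ≤ y ^ r * z ^ r := by
  rw [← Real.rpow_natCast, ← Real.rpow_mul hx, mul_comm, Real.rpow_mul hx, Real.rpow_natCast,
    ← Real.mul_rpow hy hz]
  exact Real.rpow_le_rpow (by positivity) h hr

theorem le_rpow_half_mul_rpow_half_of_sq_le {x y z : ℝ} (hy : 0 ≤ y) (h : x ^ 2 ≤ y * z) :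
    x ≤ y ^ (1 / 2 : ℝ) * z ^ (1 / 2 : ℝ) := by
  rw [← Real.sqrt_eq_rpow, ← Real.sqrt_eq_rpow, ← Real.sqrt_mul hy]
  exact (le_abs_self x).trans (Real.abs_le_sqrt h)

open scoped Matrix.Norms.L2Operator MatrixOrder

namespace Matrix

variable {n : ℕ}

lemma opN_eq_norm (M : Matrix (Fin n) (Fin n) ℂ) : opN M = ‖M‖ := rfl

lemma rpowH_eq_rpow {M : Matrix (Fin n) (Fin n) ℂ} (hM : M.PosSemidef) (t : ℝ) :
    rpowH hM.1 t = M ^ t := by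
  rw [CFC.rpow_eq_cfc_real hM.nonneg, hM.1.cfc_eq]; rfl

lemma matAbs_eq_abs (M : Matrix (Fin n) (Fin n) ℂ) : matAbs M = CFC.abs M := by
  rw [CFC.abs, star_eq_conjTranspose,
    CFC.sqrt_eq_real_sqrt _ (posSemidef_conjTranspose_mul_self M).nonneg, cfcₙ_eq_cfc,
    (posSemidef_conjTranspose_mul_self M).1.cfc_eq]; rfl

lemma opN_rpowH_matAbs (X : Matrix (Fin n) (Fin n) ℂ) {α : ℝ} (hα : 0 < α) :
    opN (rpowH (matAbs_posSemidef X).1 α) = ‖X‖ ^ α := by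
  rw [opN_eq_norm, rpowH_eq_rpow (matAbs_posSemidef X),
    CFC.norm_rpow _ hα (matAbs_posSemidef X).nonneg, matAbs_eq_abs, CFC.norm_abs]

lemma PosDef.continuous_rpow {A : Matrix (Fin n) (Fin n) ℂ} (hA : A.PosDef) :
    Continuous fun t : ℝ => A ^ t := by
  simp only [← rpowH_eq_rpow hA.posSemidef, rpowH]
  refine (continuous_const.matrix_mul (continuous_pi fun i => ?_).matrix_diagonal).matrix_mul
    continuous_const
  simp only [Real.rpow_def_of_pos (hA.eigenvalues_pos i)]
  fun_prop

end Matrix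

theorem stmt_15 {n : ℕ} (A B Z : Matrix (Fin n) (Fin n) ℂ)
    (hA : A.PosDef) (hB : B.PosDef) (α : ℝ) (hα : 0 < α) :
    ConvexOn ℝ Set.univ
      (fun t : ℝ => Real.log
        (opN (rpowH (matAbs_posSemidef (rpowH hA.1 t * Z * rpowH hB.1 t)).1 α))) ∧
    ∀ s t : ℝ,
      opN (rpowH (matAbs_posSemidef
          (rpowH hA.1 ((s + t) / 2) * Z * rpowH hB.1 ((s + t) / 2))).1 α) ≤
        opN (rpowH (matAbs_posSemidef (rpowH hA.1 t * Z * rpowH hB.1 t)).1 α) ^ (1 / 2 : ℝ) *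
          opN (rpowH (matAbs_posSemidef (rpowH hA.1 s * Z * rpowH hB.1 s)).1 α) ^ (1 / 2 : ℝ) := by
  simp only [opN_rpowH_matAbs _ hα, rpowH_eq_rpow hA.posSemidef, rpowH_eq_rpow hB.posSemidef]
  have hsq (s t : ℝ) : (‖A ^ ((s + t) / 2) * Z * B ^ ((s + t) / 2)‖ ^ α) ^ 2 ≤
      ‖A ^ t * Z * B ^ t‖ ^ α * ‖A ^ s * Z * B ^ s‖ ^ α :=
    sq_rpow_le_mul_rpow_of_sq_le (norm_nonneg _) (norm_nonneg _) (norm_nonneg _)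
      (norm_rpow_mul_mul_rpow_midpoint_sq_le hA.isUnit hB.isUnit Z s t) hα.le
  refine ⟨?_, fun s t => le_rpow_half_mul_rpow_half_of_sq_le (by positivity) (hsq s t)⟩
  rcases eq_or_ne Z 0 with rfl | hZ
  · simpa [Real.zero_rpow hα.ne'] using convexOn_const 0 convex_univ
  refine convexOn_log_of_sq_le_mul convex_univ ?_ (fun t _ => ?_) fun s _ t _ => ?_
  · exact ((continuous_norm.comp ((hA.continuous_rpow.mul continuous_const).mul
      hB.continuous_rpow)).rpow_const fun _ => Or.inr hα.le).continuousOn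
  · exact Real.rpow_pos_of_pos (norm_pos_iff.2 (rpow_mul_mul_rpow_ne_zero
      hA.isStrictlyPositive hB.isStrictlyPositive hZ t)) α
  · rw [midpoint_eq_smul_add, invOf_eq_inv, smul_eq_mul, inv_mul_eq_div, mul_comm]
    exact hsq s t
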